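/- For any type p with denominator n and any probability distribution q on an alphabet of size d with q strictly positive, the probability of the type class T_p^n under the i.i.d. product measure q^n satisfies (n+1)^{−d} · 2^{−nD(p‖q)} ≤ q^n(T_p^n) ≤ 2^{−nD(p‖q)}. -/

import Mathlib

/-!
Write `p = c / n`. Every sequence `x` of type `c` has
`qⁿ(x) = ∏ₐ q(a)^{c a} = pⁿ(x) · 2^{-n D(p‖q)}`, so `qⁿ(T) = pⁿ(T) · 2^{-n D(p‖q)}` and it remains
to show `(n + 1)^{-d} ≤ pⁿ(T) ≤ 1`. The upper bound holds because `pⁿ` is a probability measure.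
For the lower bound, the type class `T_k` has `multinomial k` elements, and `k^j / j! ≤ k^k / k!`
shows that `T = T_c` is the most likely type class under `pⁿ`; since the at most `(n + 1)^d` type
classes partition `Aⁿ`, `pⁿ(T) ≥ (n + 1)^{-d}`.
-/

open Finset Nat MvPolynomial Real

section TypeClasses

variable {A : Type*} [Fintype A] [DecidableEq A]

theorem prod_comp_eq_prod_pow_card_fiber {ι M : Type*} [Fintype ι] [CommMonoid M]
    (w : A → M) (x : ι → A) :
    ∏ i, w (x i) = ∏ a, w a ^ #{i | x i = a} := by
  simp_rw [← prod_fiberwise' univ x w, prod_const]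

def typeClass (n : ℕ) (c : A → ℕ) : Finset (Fin n → A) :=
  {x | ∀ a, #{i | x i = a} = c a}

/-- Both sides are the coefficient of `∏ₐ Xₐ ^ c a` in `(∑ₐ Xₐ) ^ n`: expand the power as a sum
over sequences, resp. by the multinomial theorem. -/
theorem card_typeClass {n : ℕ} {c : A → ℕ} (hc : ∑ a, c a = n) :
    #(typeClass n c) = multinomial univ c := by
  have hmonomial (x : Fin n → A) : ∏ i, (X (x i) : MvPolynomial A ℕ) =
      monomial (Finsupp.equivFunOnFinite.symm fun a => #{i | x i = a}) 1 := by
    rw [prod_comp_eq_prod_pow_card_fiber, monomial_eq, C_1, one_mul,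
      Finsupp.prod_fintype _ _ fun _ => pow_zero _]
    rfl
  have key := coeff_sum_X_pow_of_fintype (R := ℕ) (Finsupp.equivFunOnFinite.symm c) n
  rw [Fintype.sum_pow, coeff_sum] at key
  simpa [hmonomial, coeff_monomial, funext_iff, Finsupp.sum_fintype, hc, typeClass,
    Finsupp.multinomial_eq_of_support_subset (subset_univ _)] using key

theorem sum_typeClass_prod_eq {R : Type*} [CommSemiring R] {n : ℕ} {c : A → ℕ}
    (hc : ∑ a, c a = n) (w : A → R) :
    ∑ x ∈ typeClass n c, ∏ i, w (x i) = multinomial univ c * ∏ a, w a ^ c a := by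
  rw [sum_congr rfl fun x hx => ?_, sum_const, nsmul_eq_mul, card_typeClass hc]
  rw [prod_comp_eq_prod_pow_card_fiber]
  exact prod_congr rfl fun a _ => by rw [(mem_filter.1 hx).2 a]

theorem card_piAntidiag_univ_le (n : ℕ) :
    #(piAntidiag (univ : Finset A) n) ≤ (n + 1) ^ Fintype.card A := by
  calc #(piAntidiag (univ : Finset A) n)
      ≤ #(Fintype.piFinset fun _ : A => range (n + 1)) := by
        refine card_le_card fun k hk => Fintype.mem_piFinset.2 fun a => ?_
        rw [mem_piAntidiag] at hk
        exact mem_range_succ_iff.2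
          (hk.1 ▸ single_le_sum (fun b _ => Nat.zero_le (k b)) (mem_univ a))
    _ = (n + 1) ^ Fintype.card A := by simp

end TypeClasses

section MultinomialMode

variable {A : Type*}

theorem factorial_mul_pow_le_factorial_mul_pow_self (k j : ℕ) : k ! * k ^ j ≤ j ! * k ^ k := by
  rcases le_total j k with h | h
  · calc k ! * k ^ j = j ! * k.descFactorial (k - j) * k ^ j := by
          rw [← factorial_mul_descFactorial (Nat.sub_le k j), Nat.sub_sub_self h]
      _ ≤ j ! * k ^ (k - j) * k ^ j := by gcongr; exact descFactorial_le_pow k _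
      _ = j ! * k ^ k := by rw [mul_assoc, ← pow_add, Nat.sub_add_cancel h]
  · calc k ! * k ^ j = k ! * k ^ (j - k) * k ^ k := by
          rw [mul_assoc, ← pow_add, Nat.sub_add_cancel h]
      _ ≤ j ! * k ^ k := by gcongr; exact factorial_mul_pow_sub_le_factorial h

theorem multinomial_mul_prod_pow_le (s : Finset A) (c j : A → ℕ)
    (hj : ∑ a ∈ s, j a = ∑ a ∈ s, c a) :
    multinomial s j * ∏ a ∈ s, c a ^ j a ≤ multinomial s c * ∏ a ∈ s, c a ^ c a := by
  refine Nat.le_of_mul_le_mul_left ?_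
    (Nat.mul_pos (prod_factorial_pos s j) (prod_factorial_pos s c))
  calc (∏ a ∈ s, (j a)!) * (∏ a ∈ s, (c a)!) * (multinomial s j * ∏ a ∈ s, c a ^ j a)
      = (∑ a ∈ s, c a)! * ∏ a ∈ s, ((c a)! * c a ^ j a) := by
        rw [prod_mul_distrib, ← hj, ← multinomial_spec]; ring
    _ ≤ (∑ a ∈ s, c a)! * ∏ a ∈ s, ((j a)! * c a ^ c a) :=
        Nat.mul_le_mul_left _
          (prod_le_prod' fun a _ => factorial_mul_pow_le_factorial_mul_pow_self (c a) (j a))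
    _ = (∏ a ∈ s, (j a)!) * (∏ a ∈ s, (c a)!) * (multinomial s c * ∏ a ∈ s, c a ^ c a) := by
        rw [prod_mul_distrib, ← multinomial_spec]; ring

theorem multinomial_mul_prod_pow_le_one [DecidableEq A] {s : Finset A} {p : A → ℝ}
    (hp : ∀ a ∈ s, 0 ≤ p a) (hp1 : ∑ a ∈ s, p a = 1) {n : ℕ} {k : A → ℕ}
    (hk : k ∈ piAntidiag s n) :
    multinomial s k * ∏ a ∈ s, p a ^ k a ≤ 1 := by
  calc multinomial s k * ∏ a ∈ s, p a ^ k a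
      ≤ ∑ k ∈ piAntidiag s n, multinomial s k * ∏ a ∈ s, p a ^ k a :=
        single_le_sum (f := fun k => (multinomial s k : ℝ) * ∏ a ∈ s, p a ^ k a)
          (fun k _ => mul_nonneg (Nat.cast_nonneg _)
            (prod_nonneg fun a ha => pow_nonneg (hp a ha) _)) hk
    _ = 1 := by rw [← sum_pow_eq_sum_piAntidiag, hp1, one_pow]

theorem sum_cast_div_eq_one [Fintype A] {n : ℕ} (hn : n ≠ 0) {c : A → ℕ} (hc : ∑ a, c a = n) :
    ∑ a, (c a : ℝ) / n = 1 := by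
  rw [← sum_div, ← Nat.cast_sum, hc, div_self (Nat.cast_ne_zero.2 hn)]

theorem one_div_pow_le_multinomial_mul_prod_div_pow [Fintype A] [DecidableEq A] {n : ℕ}
    (hn : n ≠ 0) {c : A → ℕ} (hc : ∑ a, c a = n) :
    1 / ((n : ℝ) + 1) ^ Fintype.card A ≤ multinomial univ c * ∏ a, ((c a : ℝ) / n) ^ c a := by
  set M : ℝ := multinomial univ c * ∏ a, ((c a : ℝ) / n) ^ c a
  have hprod {k : A → ℕ} (hk : ∑ a, k a = n) :
      ∏ a, ((c a : ℝ) / n) ^ k a = (∏ a, c a ^ k a : ℕ) / (n : ℝ) ^ n := by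
    simp_rw [div_pow, prod_div_distrib, prod_pow_eq_pow_sum, hk]
    push_cast; rfl
  have hmode : ∀ k ∈ piAntidiag univ n, multinomial univ k * ∏ a, ((c a : ℝ) / n) ^ k a ≤ M := by
    intro k hk
    rw [mem_piAntidiag] at hk
    simp only [M, hprod hk.1, hprod hc, mul_div_assoc']
    refine div_le_div_of_nonneg_right ?_ (by positivity)
    exact_mod_cast multinomial_mul_prod_pow_le univ c k (hk.1.trans hc.symm)
  have hcover : 1 ≤ ((n : ℝ) + 1) ^ Fintype.card A * M :=
    calc (1 : ℝ) = (∑ a, (c a : ℝ) / n) ^ n := by rw [sum_cast_div_eq_one hn hc, one_pow]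
      _ = ∑ k ∈ piAntidiag univ n, multinomial univ k * ∏ a, ((c a : ℝ) / n) ^ k a :=
        sum_pow_eq_sum_piAntidiag _ _ _
      _ ≤ #(piAntidiag (univ : Finset A) n) * M := by
        simpa using sum_le_card_nsmul _ _ _ hmode
      _ ≤ ((n : ℝ) + 1) ^ Fintype.card A * M := by
        gcongr
        exact_mod_cast card_piAntidiag_univ_le n
  rw [div_le_iff₀ (by positivity)]
  linarith

end MultinomialMode

theorem pow_eq_div_pow_mul_rpow_neg_mul_logb {n : ℕ} (hn : n ≠ 0) {q : ℝ} (hq : 0 < q) (k : ℕ) :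
    q ^ k = ((k : ℝ) / n) ^ k * 2 ^ (-(n : ℝ) * ((k / n) * logb 2 ((k / n) / q))) := by
  rcases k.eq_zero_or_pos with rfl | hk
  · simp
  have hp : 0 < (k : ℝ) / n := by positivity
  have hexp : -(n : ℝ) * ((k / n) * logb 2 ((k / n) / q)) = logb 2 (q / (k / n)) * k := by
    rw [← inv_div (k / n : ℝ), logb_inv]
    field_simp
  rw [hexp, rpow_mul zero_le_two, rpow_logb two_pos (by norm_num) (div_pos hq hp), rpow_natCast,
    ← mul_pow, mul_div_cancel₀ _ hp.ne']

theorem prod_pow_eq_prod_div_pow_mul_rpow {A : Type*} [Fintype A] {n : ℕ} (hn : n ≠ 0)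
    {q : A → ℝ} (hq : ∀ a, 0 < q a) (c : A → ℕ) :
    ∏ a, q a ^ c a = (∏ a, ((c a : ℝ) / n) ^ c a) *
      2 ^ (-(n : ℝ) * ∑ a, ((c a : ℝ) / n) * logb 2 (((c a : ℝ) / n) / q a)) := by
  rw [mul_sum, rpow_sum_of_pos two_pos, ← prod_mul_distrib]
  exact prod_congr rfl fun a _ => pow_eq_div_pow_mul_rpow_neg_mul_logb hn (hq a) (c a)

theorem stmt4_general {A : Type*} [Fintype A] [DecidableEq A] (n : ℕ) (hn : 0 < n)
    (c : A → ℕ) (hc : ∑ a, c a = n)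
    (q : A → ℝ) (hq : ∀ a, 0 < q a) :
    let d := Fintype.card A
    let D : ℝ := ∑ a, ((c a : ℝ) / n) * Real.logb 2 (((c a : ℝ) / n) / q a)
    let T := Finset.univ.filter
      (fun x : Fin n → A => ∀ a, (Finset.univ.filter (fun i => x i = a)).card = c a)
    (1 / ((n : ℝ) + 1) ^ d) * (2 : ℝ) ^ (-(n : ℝ) * D) ≤ ∑ x ∈ T, ∏ i, q (x i) ∧
      ∑ x ∈ T, ∏ i, q (x i) ≤ (2 : ℝ) ^ (-(n : ℝ) * D) := by
  intro d D T
  have hprob : ∑ x ∈ T, ∏ i, q (x i) =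
      (multinomial univ c * ∏ a, ((c a : ℝ) / n) ^ c a) * 2 ^ (-(n : ℝ) * D) := by
    rw [show T = typeClass n c from rfl, sum_typeClass_prod_eq hc,
      prod_pow_eq_prod_div_pow_mul_rpow hn.ne' hq, mul_assoc]
  have hmode_le_one : multinomial univ c * ∏ a, ((c a : ℝ) / n) ^ c a ≤ 1 :=
    multinomial_mul_prod_pow_le_one (fun a _ => by positivity) (sum_cast_div_eq_one hn.ne' hc)
      (mem_piAntidiag.2 ⟨hc, fun a _ => mem_univ a⟩)
  have hexp_nonneg : 0 ≤ (2 : ℝ) ^ (-(n : ℝ) * D) := (rpow_pos_of_pos two_pos _).le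
  refine ⟨?_, ?_⟩ <;> rw [hprob]
  · exact mul_le_mul_of_nonneg_right
      (one_div_pow_le_multinomial_mul_prod_div_pow hn.ne' hc) hexp_nonneg
  · exact mul_le_of_le_one_left hexp_nonneg hmode_le_one

theorem stmt4 {A : Type*} [Fintype A] [DecidableEq A] (n : ℕ) (hn : 0 < n)
    (c : A → ℕ) (hc : ∑ a, c a = n)
    (q : A → ℝ) (hq : ∀ a, 0 < q a) (hq1 : ∑ a, q a = 1) :
    let d := Fintype.card A
    let D : ℝ := ∑ a, ((c a : ℝ) / n) * Real.logb 2 (((c a : ℝ) / n) / q a)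
    let T := Finset.univ.filter
      (fun x : Fin n → A => ∀ a, (Finset.univ.filter (fun i => x i = a)).card = c a)
    (1 / ((n : ℝ) + 1) ^ d) * (2 : ℝ) ^ (-(n : ℝ) * D) ≤ ∑ x ∈ T, ∏ i, q (x i) ∧
      ∑ x ∈ T, ∏ i, q (x i) ≤ (2 : ℝ) ^ (-(n : ℝ) * D) :=
  stmt4_general n hn c hc q hq
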